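/- Consider the scalar network game Jacobian ∇F(x) = D(x) + K(x)G where D(x), K(x) are diagonal N×N matrices with D^h(x) ≥ κ₁ > 0, 0 < ν ≤ K^h(x) ≤ κ₂ for all x, and G = Gᵀ is non-negative with zero diagonal. If κ₁ − κ₂|λ_min(G)| > 0, then for every x the matrix H_x := K(x)^{-1} satisfies H_x ∇F(x) ⪰ ((κ₁/κ₂) + λ_min(G)) I ≻ 0; in particular ∇F(x) is a P-matrix for every x. -/

import Mathlib

/-! Since `K(x)` is a positive diagonal matrix, `K(x)⁻¹ ∇F(x) = diag(D/K) + G`, which splits as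
`diag(D/K - κ₁/κ₂) + (G - λ_min(G) I)`, a sum of two positive semidefinite matrices. As `G` has
zero trace, `λ_min(G) ≤ 0`, so the hypothesis gives `κ₁/κ₂ + λ_min(G) > 0`. Hence `K(x)⁻¹ ∇F(x)`
is positive definite, its principal minors are positive, and scaling the rows by the positive
entries of `K(x)` keeps them positive. -/

open Matrix

/-- A real square matrix is a P-matrix if all its principal minors are positive. -/
def IsPMatrix {m : Type*} [Fintype m] [DecidableEq m] (M : Matrix m m ℝ) : Prop :=
  ∀ S : Finset m, 0 < (M.submatrix (Subtype.val : {i // i ∈ S} → m) Subtype.val).det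

open scoped ComplexOrder

namespace Matrix

lemma posDef_of_posSemidef_sub_smul_one {n : Type*} [DecidableEq n] {M : Matrix n n ℝ} {c : ℝ}
    (hc : 0 < c) (h : (M - c • (1 : Matrix n n ℝ)).PosSemidef) : M.PosDef := by
  simpa using PosDef.posSemidef_add h (PosDef.one.smul hc)

variable {n : Type*} [Fintype n] [DecidableEq n]

lemma IsHermitian.posSemidef_sub_smul_one {𝕜 : Type*} [RCLike 𝕜] {A : Matrix n n 𝕜}
    (hA : A.IsHermitian) {c : ℝ} (hc : ∀ i, c ≤ hA.eigenvalues i) :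
    (A - c • (1 : Matrix n n 𝕜)).PosSemidef := by
  have hshift : diagonal (RCLike.ofReal ∘ fun i => hA.eigenvalues i - c) =
      diagonal (RCLike.ofReal ∘ hA.eigenvalues) - c • (1 : Matrix n n 𝕜) := by
    ext i j
    by_cases hij : i = j <;> simp [hij, Algebra.algebraMap_eq_smul_one, sub_smul]
  have hconj : A - c • (1 : Matrix n n 𝕜) = Unitary.conjStarAlgAut 𝕜 _ hA.eigenvectorUnitary
      (diagonal (RCLike.ofReal ∘ fun i => hA.eigenvalues i - c)) := by
    conv_lhs => rw [hA.spectral_theorem]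
    rw [hshift, map_sub]
    simp [Unitary.conjStarAlgAut_apply]
  rw [hconj, Unitary.conjStarAlgAut_apply, Unitary.isUnit_coe.posSemidef_star_right_conjugate_iff]
  simpa [sub_nonneg] using hc

lemma IsHermitian.exists_eigenvalues_nonpos_of_trace_eq_zero {𝕜 : Type*} [RCLike 𝕜] [Nonempty n]
    {A : Matrix n n 𝕜} (hA : A.IsHermitian) (htr : A.trace = 0) : ∃ i, hA.eigenvalues i ≤ 0 := by
  have hsum : ∑ i, hA.eigenvalues i = 0 := by
    exact_mod_cast hA.trace_eq_sum_eigenvalues.symm.trans htr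
  by_contra! hpos
  exact (Finset.sum_pos (fun i _ => hpos i) Finset.univ_nonempty).ne' hsum

lemma PosDef.isPMatrix {M : Matrix n n ℝ} (hM : M.PosDef) : IsPMatrix M :=
  fun _ => (hM.submatrix Subtype.val_injective).det_pos

lemma _root_.IsPMatrix.diagonal_mul {M : Matrix n n ℝ} (hM : IsPMatrix M) {d : n → ℝ}
    (hd : ∀ i, 0 < d i) : IsPMatrix (diagonal d * M) := by
  intro S
  have hsub : (diagonal d * M).submatrix (Subtype.val : {i // i ∈ S} → n) Subtype.val =
      diagonal (fun i : {i // i ∈ S} => d i) * M.submatrix Subtype.val Subtype.val := by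
    ext i j
    simp
  rw [hsub, det_mul, det_diagonal]
  exact mul_pos (Finset.prod_pos fun i _ => hd i) (hM S)

lemma posSemidef_diagonal_inv_mul_sub_smul_one {G : Matrix n n ℝ} (hG : G.IsHermitian)
    {d k : n → ℝ} {κ₁ κ₂ lam : ℝ} (hκ₁ : 0 ≤ κ₁) (hd : ∀ i, κ₁ ≤ d i) (hk : ∀ i, 0 < k i)
    (hku : ∀ i, k i ≤ κ₂) (hlam : ∀ i, lam ≤ hG.eigenvalues i) :
    (diagonal (fun i => (k i)⁻¹) * (diagonal d + diagonal k * G) -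
      (κ₁ / κ₂ + lam) • (1 : Matrix n n ℝ)).PosSemidef := by
  have hcancel : diagonal (fun i => (k i)⁻¹) * (diagonal d + diagonal k * G) =
      diagonal (fun i => d i / k i) + G := by
    rw [mul_add, diagonal_mul_diagonal, ← mul_assoc, diagonal_mul_diagonal]
    simp [inv_mul_cancel₀ (hk _).ne', div_eq_inv_mul]
  have hsplit : diagonal (fun i => d i / k i) + G - (κ₁ / κ₂ + lam) • (1 : Matrix n n ℝ) =
      diagonal (fun i => d i / k i - κ₁ / κ₂) + (G - lam • (1 : Matrix n n ℝ)) := by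
    ext i j
    rcases eq_or_ne i j with rfl | hij
    · simp
      ring
    · simp [hij]
  have hdiag : ∀ i, κ₁ / κ₂ ≤ d i / k i := fun i =>
    div_le_div₀ (hκ₁.trans (hd i)) (hd i) (hk i) (hku i)
  rw [hcancel, hsplit]
  exact (posSemidef_diagonal_iff.mpr fun i => sub_nonneg.mpr (hdiag i)).add
    (hG.posSemidef_sub_smul_one hlam)

end Matrix

theorem stmt13_general (N : ℕ) (hN : 0 < N)
    (G : Matrix (Fin N) (Fin N) ℝ) (hGsym : G.IsHermitian)
    (hGd : ∀ i, G i i = 0)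
    (κ₁ κ₂ ν : ℝ) (hν : 0 < ν)
    (D K : (Fin N → ℝ) → (Fin N → ℝ))
    (hD : ∀ x h, κ₁ ≤ D x h)
    (hKl : ∀ x h, ν ≤ K x h) (hKu : ∀ x h, K x h ≤ κ₂)
    (hcond : 0 < κ₁ - κ₂ *
      |Finset.univ.inf' (Finset.univ_nonempty_iff.mpr ⟨⟨0, hN⟩⟩) hGsym.eigenvalues|) :
    ∀ x : Fin N → ℝ,
      (Matrix.diagonal (fun h => (K x h)⁻¹) *
          (Matrix.diagonal (D x) + Matrix.diagonal (K x) * G) -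
        (κ₁ / κ₂ + Finset.univ.inf' (Finset.univ_nonempty_iff.mpr ⟨⟨0, hN⟩⟩)
            hGsym.eigenvalues) • (1 : Matrix (Fin N) (Fin N) ℝ)).PosSemidef ∧
      0 < κ₁ / κ₂ + Finset.univ.inf' (Finset.univ_nonempty_iff.mpr ⟨⟨0, hN⟩⟩)
            hGsym.eigenvalues ∧
      IsPMatrix (Matrix.diagonal (D x) + Matrix.diagonal (K x) * G) := by
  have : Nonempty (Fin N) := ⟨⟨0, hN⟩⟩
  set lam := Finset.univ.inf' (Finset.univ_nonempty_iff.mpr ⟨⟨0, hN⟩⟩) hGsym.eigenvalues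
  have hlam : ∀ i, lam ≤ hGsym.eigenvalues i := fun i => Finset.inf'_le _ (Finset.mem_univ i)
  have hlam0 : lam ≤ 0 := by
    obtain ⟨i, hi⟩ := hGsym.exists_eigenvalues_nonpos_of_trace_eq_zero (by simp [trace, hGd])
    exact (hlam i).trans hi
  have hκ₂ : 0 < κ₂ := hν.trans_le ((hKl 0 ⟨0, hN⟩).trans (hKu 0 ⟨0, hN⟩))
  rw [abs_of_nonpos hlam0] at hcond
  have hκ₁ : 0 ≤ κ₁ := by linarith [mul_nonpos_of_nonneg_of_nonpos hκ₂.le hlam0]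
  have hc : 0 < κ₁ / κ₂ + lam := by
    rw [div_add' _ _ _ hκ₂.ne']
    exact div_pos (by linarith) hκ₂
  intro x
  have hK : ∀ h, 0 < K x h := fun h => hν.trans_le (hKl x h)
  have hpsd := posSemidef_diagonal_inv_mul_sub_smul_one hGsym hκ₁ (hD x) hK (hKu x) hlam
  refine ⟨hpsd, hc, ?_⟩
  have hfactor : diagonal (D x) + diagonal (K x) * G = diagonal (K x) *
      (diagonal (fun h => (K x h)⁻¹) * (diagonal (D x) + diagonal (K x) * G)) := by
    rw [← mul_assoc, diagonal_mul_diagonal]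
    simp [mul_inv_cancel₀ (hK _).ne']
  rw [hfactor]
  exact (posDef_of_posSemidef_sub_smul_one hc hpsd).isPMatrix.diagonal_mul hK

/-- For a scalar network game Jacobian `∇F(x) = D(x) + K(x)G` with
`D(x), K(x)` diagonal, `D^h(x) ≥ κ₁ > 0`, `0 < ν ≤ K^h(x) ≤ κ₂`, `G = Gᵀ`
non-negative with zero diagonal, and `κ₁ - κ₂|λ_min(G)| > 0`:
for every `x`, with `H_x := K(x)⁻¹`, one has
`H_x ∇F(x) ⪰ ((κ₁/κ₂) + λ_min(G)) I ≻ 0`, and `∇F(x)` is a P-matrix. -/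
theorem stmt13 (N : ℕ) (hN : 0 < N)
    (G : Matrix (Fin N) (Fin N) ℝ) (hGsym : G.IsHermitian)
    (hGnn : ∀ i j, 0 ≤ G i j) (hGd : ∀ i, G i i = 0)
    (κ₁ κ₂ ν : ℝ) (hν : 0 < ν) (hκ₁ : 0 < κ₁)
    (D K : (Fin N → ℝ) → (Fin N → ℝ))
    (hD : ∀ x h, κ₁ ≤ D x h)
    (hKl : ∀ x h, ν ≤ K x h) (hKu : ∀ x h, K x h ≤ κ₂)
    (hcond : 0 < κ₁ - κ₂ *
      |Finset.univ.inf' (Finset.univ_nonempty_iff.mpr ⟨⟨0, hN⟩⟩) hGsym.eigenvalues|) :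
    ∀ x : Fin N → ℝ,
      (Matrix.diagonal (fun h => (K x h)⁻¹) *
          (Matrix.diagonal (D x) + Matrix.diagonal (K x) * G) -
        (κ₁ / κ₂ + Finset.univ.inf' (Finset.univ_nonempty_iff.mpr ⟨⟨0, hN⟩⟩)
            hGsym.eigenvalues) • (1 : Matrix (Fin N) (Fin N) ℝ)).PosSemidef ∧
      0 < κ₁ / κ₂ + Finset.univ.inf' (Finset.univ_nonempty_iff.mpr ⟨⟨0, hN⟩⟩)
            hGsym.eigenvalues ∧
      IsPMatrix (Matrix.diagonal (D x) + Matrix.diagonal (K x) * G) :=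
  stmt13_general N hN G hGsym hGd κ₁ κ₂ ν hν D K hD hKl hKu hcond
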